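/- Let X be a random variable and A a {0,1}-valued random variable, and define the propensity score e(X) = P(A = 1 | X). Then A is conditionally independent of X given e(X); equivalently, P(A = 1 | X, e(X)) = e(X) = P(A = 1 | e(X)) almost surely. -/

import Mathlib

open Classical in
noncomputable def Pr {Ω : Type*} [Fintype Ω] (w : Ω → ℝ) (p : Ω → Prop) : ℝ :=
  ∑ ω : Ω, if p ω then w ω else 0

/-!
Split the event `e(X) = v` along the values `x` of `X` with `e x = v`. On each such fibre
`P(A = 1, X = x) = e x · P(X = x) = v · P(X = x)`, so summing gives
`P(A = 1, e(X) = v) = v · P(e(X) = v)`, which is the balancing property. Conditional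
independence follows because on `X = x` the score `e(X)` is the constant `e x`: both sides of
the factorization vanish unless `e x = v`, and then they are `v · P(X = x) · P(e(X) = v)`.
-/

open Finset

section Pr

variable {Ω 𝒳 : Type*} [Fintype Ω] (w : Ω → ℝ)

theorem Pr_congr {p q : Ω → Prop} (h : ∀ ω, p ω ↔ q ω) : Pr w p = Pr w q :=
  congrArg (Pr w) (funext fun ω => propext (h ω))

theorem Pr_nonneg (hw0 : ∀ ω, 0 ≤ w ω) (p : Ω → Prop) : 0 ≤ Pr w p :=
  sum_nonneg fun ω _ => by split_ifs <;> simp [hw0 ω]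

theorem Pr_mono (hw0 : ∀ ω, 0 ≤ w ω) {p q : Ω → Prop} (h : ∀ ω, p ω → q ω) :
    Pr w p ≤ Pr w q :=
  sum_le_sum fun ω _ => by
    by_cases hp : p ω
    · simp [hp, h ω hp]
    · by_cases hq : q ω <;> simp [hp, hq, hw0 ω]

/-- With `x / 0 = 0`, this says `P(p | q) · P(q) = P(p ∧ q)` also when `P(q) = 0`. -/
theorem Pr_and_div_mul_cancel (hw0 : ∀ ω, 0 ≤ w ω) (p q : Ω → Prop) :
    Pr w (fun ω => p ω ∧ q ω) / Pr w q * Pr w q = Pr w (fun ω => p ω ∧ q ω) :=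
  div_mul_cancel_of_imp fun h =>
    le_antisymm (h ▸ Pr_mono w hw0 fun _ hω => hω.2) (Pr_nonneg w hw0 _)

theorem Pr_eq_sum_fiber [Fintype 𝒳] (X : Ω → 𝒳) (p : Ω → Prop) :
    Pr w p = ∑ x, Pr w (fun ω => p ω ∧ X ω = x) := by
  classical
  simp only [Pr]
  rw [sum_comm]
  refine sum_congr rfl fun ω _ => ?_
  by_cases h : p ω <;> simp [h]

theorem Pr_and_comp_of_imp (X : Ω → 𝒳) {p : Ω → Prop} {x : 𝒳} (hp : ∀ ω, p ω → X ω = x)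
    (q : 𝒳 → Prop) [DecidablePred q] :
    Pr w (fun ω => p ω ∧ q (X ω)) = if q x then Pr w p else 0 := by
  split_ifs with hq
  · exact Pr_congr w fun ω => ⟨And.left, fun h => ⟨h, hp ω h ▸ hq⟩⟩
  · have hnone : ∀ ω, ¬(p ω ∧ q (X ω)) := fun ω h => hq (hp ω h.1 ▸ h.2)
    simp [Pr, hnone]

theorem Pr_and_comp_eq_sum [Fintype 𝒳] (X : Ω → 𝒳) (p : Ω → Prop) (q : 𝒳 → Prop)
    [DecidablePred q] :
    Pr w (fun ω => p ω ∧ q (X ω)) = ∑ x, if q x then Pr w (fun ω => p ω ∧ X ω = x) else 0 := by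
  rw [Pr_eq_sum_fiber w X]
  refine sum_congr rfl fun x _ => ?_
  rw [← Pr_and_comp_of_imp w X (fun ω (h : p ω ∧ X ω = x) => h.2) q]
  exact Pr_congr w fun ω => by tauto

theorem Pr_comp_eq_sum [Fintype 𝒳] (X : Ω → 𝒳) (q : 𝒳 → Prop) [DecidablePred q] :
    Pr w (fun ω => q (X ω)) = ∑ x, if q x then Pr w (fun ω => X ω = x) else 0 := by
  simpa using Pr_and_comp_eq_sum w X (fun _ => True) q

theorem Pr_and_comp_eq_mul [Fintype 𝒳] {X : Ω → 𝒳} {p : Ω → Prop} {f : 𝒳 → ℝ}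
    (h : ∀ x, Pr w (fun ω => p ω ∧ X ω = x) = f x * Pr w (fun ω => X ω = x)) (v : ℝ) :
    Pr w (fun ω => p ω ∧ f (X ω) = v) = v * Pr w (fun ω => f (X ω) = v) := by
  rw [Pr_and_comp_eq_sum w X p (f · = v), Pr_comp_eq_sum w X (f · = v), mul_sum]
  refine sum_congr rfl fun x _ => ?_
  split_ifs with hx
  · rw [h, hx]
  · rw [mul_zero]

end Pr

theorem propensity_balancing_general
    {Ω 𝒳 : Type*} [Fintype Ω] [Fintype 𝒳]
    (w : Ω → ℝ) (hw0 : ∀ ω, 0 ≤ w ω)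
    (X : Ω → 𝒳) (A : Ω → ℕ)
    (e : 𝒳 → ℝ)
    (he : ∀ x : 𝒳, e x = Pr w (fun ω => A ω = 1 ∧ X ω = x) / Pr w (fun ω => X ω = x)) :
    (∀ v : ℝ, 0 < Pr w (fun ω => e (X ω) = v) →
      Pr w (fun ω => A ω = 1 ∧ e (X ω) = v) / Pr w (fun ω => e (X ω) = v) = v) ∧
    (∀ (x : 𝒳) (v : ℝ),
      Pr w (fun ω => A ω = 1 ∧ X ω = x ∧ e (X ω) = v) * Pr w (fun ω => e (X ω) = v)
        = Pr w (fun ω => A ω = 1 ∧ e (X ω) = v) * Pr w (fun ω => X ω = x ∧ e (X ω) = v)) := by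
  have hfibre : ∀ x, Pr w (fun ω => A ω = 1 ∧ X ω = x) = e x * Pr w (fun ω => X ω = x) :=
    fun x => by rw [he x, Pr_and_div_mul_cancel w hw0]
  have hbal := Pr_and_comp_eq_mul w hfibre
  refine ⟨fun v hv => by rw [hbal, mul_div_cancel_right₀ _ hv.ne'], fun x v => ?_⟩
  rw [Pr_congr w fun ω => and_assoc.symm, hbal,
    Pr_and_comp_of_imp w X (fun ω (h : A ω = 1 ∧ X ω = x) => h.2) (fun y => e y = v),
    Pr_and_comp_of_imp w X (fun _ h => h) (fun y => e y = v)]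
  split_ifs with hx
  · rw [hfibre, hx]
    ring
  · simp

/-- Rosenbaum–Rubin balancing property of the propensity score `e(x) = P(A=1 | X=x)`:
`P(A=1 | e(X) = v) = v` whenever `P(e(X) = v) > 0`; consequently `A ⫫ X | e(X)`,
i.e. `P(A=1 ∧ X=x | e(X)=v)` factorizes. -/
theorem propensity_balancing
    {Ω 𝒳 : Type*} [Fintype Ω] [Fintype 𝒳]
    (w : Ω → ℝ) (hw0 : ∀ ω, 0 ≤ w ω) (hw1 : ∑ ω : Ω, w ω = 1)
    (X : Ω → 𝒳) (A : Ω → ℕ) (hA : ∀ ω, A ω = 0 ∨ A ω = 1)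
    (e : 𝒳 → ℝ)
    (he : ∀ x : 𝒳, e x = Pr w (fun ω => A ω = 1 ∧ X ω = x) / Pr w (fun ω => X ω = x)) :
    (∀ v : ℝ, 0 < Pr w (fun ω => e (X ω) = v) →
      Pr w (fun ω => A ω = 1 ∧ e (X ω) = v) / Pr w (fun ω => e (X ω) = v) = v) ∧
    (∀ (x : 𝒳) (v : ℝ),
      Pr w (fun ω => A ω = 1 ∧ X ω = x ∧ e (X ω) = v) * Pr w (fun ω => e (X ω) = v)
        = Pr w (fun ω => A ω = 1 ∧ e (X ω) = v) * Pr w (fun ω => X ω = x ∧ e (X ω) = v)) :=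
  propensity_balancing_general w hw0 X A e he
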